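/- arXiv:2107.05911 — 7 statements merged into one kernel-verified Lean document; each statement's English description precedes it below -/
import Mathlib

section
/- Let D_S and D_T be data distributions on X × {−1,+1}, let H be a nonempty set of measurable classifiers, and suppose there exists h̄ ∈ H attaining the minimum combined error λ := min_{h' ∈ H} (err_{D_T}(h') + err_{D_S}(h')). Then for every h ∈ H, the error of h on D_T satisfies err_{D_T}(h) ≤ err_{D_S}(h) + λ + (1/2) · d_{H×H}(D_S, D_T). (In the paper, D_T = D(h) is the distribution induced by deploying h, but the bound holds for an arbitrary target distribution.) -/
open MeasureTheory

/-- Classification error of classifier `h` (labels encoded as `Bool`, `true = +1`,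
`false = -1`) on a data distribution `D` over `X × Bool`. -/
noncomputable def err {X : Type*} [MeasurableSpace X]
    (D : Measure (X × Bool)) (h : X → Bool) : ℝ :=
  (D {p : X × Bool | h p.1 ≠ p.2}).toReal

/-- Disagreement probability of two classifiers on a data distribution. -/
noncomputable def dis {X : Type*} [MeasurableSpace X]
    (D : Measure (X × Bool)) (h h' : X → Bool) : ℝ :=
  (D {p : X × Bool | h p.1 ≠ h' p.1}).toReal

/-- The `H × H` divergence between two data distributions. -/
noncomputable def dHH {X : Type*} [MeasurableSpace X]
    (H : Set (X → Bool)) (D D' : Measure (X × Bool)) : ℝ :=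
  2 * sSup {r : ℝ | ∃ h ∈ H, ∃ h' ∈ H, r = |dis D h h' - dis D' h h'|}

private lemma sub_meas {X : Type*} [MeasurableSpace X]
    (D : Measure (X × Bool)) (A B C : Set (X × Bool)) (hsub : A ⊆ B ∪ C)
    [IsFiniteMeasure D] :
    (D A).toReal ≤ (D B).toReal + (D C).toReal := by
  have h1 : D A ≤ D B + D C := le_trans (measure_mono hsub) (measure_union_le B C)
  have h2 : (D A).toReal ≤ (D B + D C).toReal :=
    ENNReal.toReal_mono (by finiteness) h1
  rwa [ENNReal.toReal_add (measure_ne_top D B) (measure_ne_top D C)] at h2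

private lemma err_triangle {X : Type*} [MeasurableSpace X]
    (D : Measure (X × Bool)) [IsFiniteMeasure D] (h h' : X → Bool) :
    err D h ≤ err D h' + dis D h h' := by
  apply sub_meas
  intro p hp
  by_cases hc : h' p.1 = p.2
  · right; simp only [Set.mem_setOf_eq] at *; rw [hc]; exact hp
  · left; exact hc

private lemma dis_triangle {X : Type*} [MeasurableSpace X]
    (D : Measure (X × Bool)) [IsFiniteMeasure D] (h h' : X → Bool) :
    dis D h h' ≤ err D h + err D h' := by
  apply sub_meas
  intro p hp
  by_cases hc : h p.1 = p.2
  · right; simp only [Set.mem_setOf_eq] at *; rw [← hc]; exact fun e => hp e.symm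
  · left; exact hc

/-- If `hbar ∈ H` attains the minimum combined error
`λ = min_{h' ∈ H} (err_{D_T}(h') + err_{D_S}(h'))`, then for every `h ∈ H`:
`err_{D_T}(h) ≤ err_{D_S}(h) + λ + d_{H×H}(D_S, D_T) / 2`. -/
theorem target_error_upper_bound
    {X : Type*} [MeasurableSpace X]
    (H : Set (X → Bool)) (hH : H.Nonempty)
    (hHmeas : ∀ f ∈ H, Measurable f)
    (DS DT : Measure (X × Bool))
    [IsProbabilityMeasure DS] [IsProbabilityMeasure DT]
    (hbar : X → Bool) (hhbar : hbar ∈ H)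
    (hbar_min : ∀ h' ∈ H, err DT hbar + err DS hbar ≤ err DT h' + err DS h')
    (h : X → Bool) (hh : h ∈ H) :
    err DT h ≤ err DS h + (err DT hbar + err DS hbar) + dHH H DS DT / 2 := by
  have hdiv : |dis DS h hbar - dis DT h hbar| ≤ dHH H DS DT / 2 := by
    have heq : dHH H DS DT / 2
        = sSup {r : ℝ | ∃ f ∈ H, ∃ g ∈ H, r = |dis DS f g - dis DT f g|} := by
      rw [dHH]; ring
    rw [heq]
    apply le_csSup
    · refine ⟨2, ?_⟩
      rintro r ⟨f, _, g, _, rfl⟩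
      have h1 : dis DS f g ≤ 1 := by
        have := prob_le_one (μ := DS) (s := {p : X × Bool | f p.1 ≠ g p.1})
        simpa [dis] using ENNReal.toReal_mono ENNReal.one_ne_top this
      have h2 : dis DT f g ≤ 1 := by
        have := prob_le_one (μ := DT) (s := {p : X × Bool | f p.1 ≠ g p.1})
        simpa [dis] using ENNReal.toReal_mono ENNReal.one_ne_top this
      have h3 : (0:ℝ) ≤ dis DS f g := ENNReal.toReal_nonneg
      have h4 : (0:ℝ) ≤ dis DT f g := ENNReal.toReal_nonneg
      rw [abs_le]; constructor <;> linarith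
    · exact ⟨h, hh, hbar, hhbar, rfl⟩
  have e1 : err DT h ≤ err DT hbar + dis DT h hbar := err_triangle DT h hbar
  have e2 : dis DT h hbar ≤ dis DS h hbar + dHH H DS DT / 2 := by
    have := abs_sub_le_iff.mp hdiv
    linarith [this.2]
  have e3 : dis DS h hbar ≤ err DS h + err DS hbar := dis_triangle DS h hbar
  linarith
end

section
/- Let D and D' be data distributions on X × {−1,+1}, let H be a nonempty set of measurable classifiers containing h and g, and suppose there exists h̄ ∈ H attaining the minimum combined error λ := min_{h' ∈ H} (err_{D'}(h') + err_D(h')). Define Λ(h) := err_{D'}(h) + err_D(h). Then err_D(h) − err_{D'}(g) ≤ (λ + Λ(h))/2 + (1/2) · d_{H×H}(D', D). (In the paper, D = D(h) is the distribution induced by h and D' = D(h*_T) is induced by the classifier h*_T = g minimizing the induced risk; the inequality holds for arbitrary such distributions and classifiers in H.) -/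
open MeasureTheory

lemma dis_nonneg {X : Type*} [MeasurableSpace X]
    (D : Measure (X × Bool)) (h h' : X → Bool) : 0 ≤ dis D h h' :=
  ENNReal.toReal_nonneg

lemma dis_le_one {X : Type*} [MeasurableSpace X]
    (D : Measure (X × Bool)) [IsProbabilityMeasure D] (h h' : X → Bool) :
    dis D h h' ≤ 1 := by
  have := prob_le_one (μ := D) (s := {p : X × Bool | h p.1 ≠ h' p.1})
  simpa [dis] using ENNReal.toReal_mono (by simp) this

lemma err_nonneg {X : Type*} [MeasurableSpace X]
    (D : Measure (X × Bool)) (h : X → Bool) : 0 ≤ err D h :=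
  ENNReal.toReal_nonneg

lemma sub_triangle {X : Type*} [MeasurableSpace X]
    (D : Measure (X × Bool)) [IsProbabilityMeasure D] (A B C : Set (X × Bool))
    (hsub : A ⊆ B ∪ C) :
    (D A).toReal ≤ (D B).toReal + (D C).toReal := by
  rw [← ENNReal.toReal_add (measure_ne_top D B) (measure_ne_top D C)]
  exact ENNReal.toReal_mono
    (ENNReal.add_ne_top.2 ⟨measure_ne_top D B, measure_ne_top D C⟩)
    (le_trans (measure_mono hsub) (measure_union_le _ _))

/-- If `hbar ∈ H` attains the minimum combined error
`λ = min_{h' ∈ H} (err_{D'}(h') + err_D(h'))`, and `Λ(h) = err_{D'}(h) + err_D(h)`, then for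
`h, g ∈ H`: `err_D(h) − err_{D'}(g) ≤ (λ + Λ(h)) / 2 + d_{H×H}(D', D) / 2`. -/
theorem induced_error_gap_upper_bound
    {X : Type*} [MeasurableSpace X]
    (H : Set (X → Bool)) (hH : H.Nonempty)
    (hHmeas : ∀ f ∈ H, Measurable f)
    (D D' : Measure (X × Bool))
    [IsProbabilityMeasure D] [IsProbabilityMeasure D']
    (h g : X → Bool) (hh : h ∈ H) (hg : g ∈ H)
    (hbar : X → Bool) (hhbar : hbar ∈ H)
    (hbar_min : ∀ h' ∈ H, err D' hbar + err D hbar ≤ err D' h' + err D h') :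
    err D h - err D' g ≤
      ((err D' hbar + err D hbar) + (err D' h + err D h)) / 2 + dHH H D' D / 2 := by
  have a : err D h ≤ err D hbar + dis D h hbar := by
    apply sub_triangle
    intro p hp
    by_cases hb : hbar p.1 = p.2
    · right; simp only [Set.mem_setOf_eq] at *; intro he; exact hp (he.trans hb)
    · left; exact hb
  have b : dis D' h hbar ≤ err D' h + err D' hbar := by
    apply sub_triangle
    intro p hp
    by_cases hb : hbar p.1 = p.2
    · left; simp only [Set.mem_setOf_eq] at *; intro he; exact hp (he.trans hb.symm)
    · right; exact hb
  set S := {r : ℝ | ∃ h₁ ∈ H, ∃ h₂ ∈ H, r = |dis D' h₁ h₂ - dis D h₁ h₂|} with hS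
  have hbdd : BddAbove S := by
    refine ⟨2, fun r hr => ?_⟩
    obtain ⟨h₁, -, h₂, -, rfl⟩ := hr
    have := abs_sub_abs_le_abs_sub (dis D' h₁ h₂) (dis D h₁ h₂)
    have h1 := dis_le_one D' h₁ h₂
    have h2 := dis_le_one D h₁ h₂
    have h3 := dis_nonneg D' h₁ h₂
    have h4 := dis_nonneg D h₁ h₂
    rw [abs_sub_le_iff]
    constructor <;> linarith
  have hmem : |dis D' h hbar - dis D h hbar| ∈ S := ⟨h, hh, hbar, hhbar, rfl⟩
  have hsup : |dis D' h hbar - dis D h hbar| ≤ sSup S := le_csSup hbdd hmem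
  have habs : dis D h hbar - dis D' h hbar ≤ |dis D' h hbar - dis D h hbar| := by
    rw [abs_sub_comm]; exact le_abs_self _
  have hsup0 : 0 ≤ sSup S := le_trans (abs_nonneg _) hsup
  have hd : dHH H D' D = 2 * sSup S := rfl
  have hg0 := err_nonneg D' g
  rw [hd]
  linarith
end

section
/- Let D_S and D_T be data distributions on X × {−1,+1} and let h : X → {−1,+1} be a measurable classifier. Then max{ err_{D_S}(h), err_{D_T}(h) } ≥ ( d_TV((D_S)_Y, (D_T)_Y) − d_TV((D_S)_h, (D_T)_h) ) / 2, where (D)_Y denotes the label marginal of D and (D)_h denotes the prediction marginal of D under h. (In the paper, D_T = D(h) is the distribution induced by h; the inequality holds for an arbitrary target distribution.) -/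
open MeasureTheory

/-- Label marginal of a data distribution: the pushforward under `(x, y) ↦ y`. -/
noncomputable def labelMarginal {X : Type*} [MeasurableSpace X]
    (D : Measure (X × Bool)) : Measure Bool :=
  D.map Prod.snd

/-- Prediction marginal of a data distribution under classifier `h`: the pushforward
under `(x, y) ↦ h x`. -/
noncomputable def predMarginal {X : Type*} [MeasurableSpace X]
    (D : Measure (X × Bool)) (h : X → Bool) : Measure Bool :=
  D.map (fun p => h p.1)

/-- Total variation distance between two probability measures on the two-point label
space: `|P({+1}) − Q({+1})|`. -/
noncomputable def dTV2 (P Q : Measure Bool) : ℝ :=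
  |(P {true}).toReal - (Q {true}).toReal|

/-- Lower bound for learning tradeoffs: any classifier `h` must incur, on either the
source distribution `D_S` or the target distribution `D_T`, an error of at least
`(d_TV((D_S)_Y, (D_T)_Y) − d_TV((D_S)_h, (D_T)_h)) / 2`. -/
theorem tradeoff_lower_bound
    {X : Type*} [MeasurableSpace X]
    (DS DT : Measure (X × Bool))
    [IsProbabilityMeasure DS] [IsProbabilityMeasure DT]
    (h : X → Bool) (hmeas : Measurable h) :
    max (err DS h) (err DT h) ≥
      (dTV2 (labelMarginal DS) (labelMarginal DT)
        - dTV2 (predMarginal DS h) (predMarginal DT h)) / 2 := by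
  have key : ∀ (D : Measure (X × Bool)) [IsProbabilityMeasure D],
      |(labelMarginal D {true}).toReal - (predMarginal D h {true}).toReal| ≤ err D h := by
    intro D _
    have hA : labelMarginal D {true} = D {p : X × Bool | p.2 = true} := by
      rw [labelMarginal, Measure.map_apply measurable_snd (measurableSet_singleton true)]
      rfl
    have hB : predMarginal D h {true} = D {p : X × Bool | h p.1 = true} := by
      rw [predMarginal, Measure.map_apply (show Measurable (fun p : X × Bool => h p.1) from hmeas.comp measurable_fst)
        (measurableSet_singleton true)]
      rfl
    rw [hA, hB, err]
    set A : Set (X × Bool) := {p : X × Bool | p.2 = true}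
    set B : Set (X × Bool) := {p : X × Bool | h p.1 = true}
    set E : Set (X × Bool) := {p : X × Bool | h p.1 ≠ p.2}
    have hAB : A ⊆ B ∪ E := by
      intro p hp
      by_cases hb : h p.1 = true
      · exact Or.inl hb
      · exact Or.inr (by simp only [E, Set.mem_setOf_eq]; rw [hp]; exact hb)
    have hBA : B ⊆ A ∪ E := by
      intro p hp
      by_cases ha : p.2 = true
      · exact Or.inl ha
      · exact Or.inr (by simp only [E, Set.mem_setOf_eq]; rw [hp]; exact fun c => ha c.symm)
    have h1 : D A ≤ D B + D E := le_trans (measure_mono hAB) (measure_union_le _ _)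
    have h2 : D B ≤ D A + D E := le_trans (measure_mono hBA) (measure_union_le _ _)
    have hAne : D A ≠ ⊤ := measure_ne_top _ _
    have hBne : D B ≠ ⊤ := measure_ne_top _ _
    have hEne : D E ≠ ⊤ := measure_ne_top _ _
    rw [abs_sub_le_iff]
    constructor
    · have := ENNReal.toReal_mono (by finiteness) h1
      rw [ENNReal.toReal_add hBne hEne] at this
      linarith
    · have := ENNReal.toReal_mono (by finiteness) h2
      rw [ENNReal.toReal_add hAne hEne] at this
      linarith
  have kS := key DS
  have kT := key DT
  have tri : dTV2 (labelMarginal DS) (labelMarginal DT) ≤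
      dTV2 (predMarginal DS h) (predMarginal DT h) + err DS h + err DT h := by
    rw [dTV2, dTV2]
    have := abs_sub_abs_le_abs_sub ((labelMarginal DS {true}).toReal)
      ((labelMarginal DT {true}).toReal)
    calc |(labelMarginal DS {true}).toReal - (labelMarginal DT {true}).toReal|
        ≤ |(labelMarginal DS {true}).toReal - (predMarginal DS h {true}).toReal|
          + |(predMarginal DS h {true}).toReal - (predMarginal DT h {true}).toReal|
          + |(predMarginal DT h {true}).toReal - (labelMarginal DT {true}).toReal| := by
          have := abs_sub_le ((labelMarginal DS {true}).toReal)
            ((predMarginal DS h {true}).toReal) ((labelMarginal DT {true}).toReal)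
          have := abs_sub_le ((predMarginal DS h {true}).toReal)
            ((predMarginal DT h {true}).toReal) ((labelMarginal DT {true}).toReal)
          linarith
      _ ≤ _ := by
          have h3 : |(predMarginal DT h {true}).toReal - (labelMarginal DT {true}).toReal|
              = |(labelMarginal DT {true}).toReal - (predMarginal DT h {true}).toReal| :=
            abs_sub_comm _ _
          rw [h3]; linarith
  have hmS : err DS h ≤ max (err DS h) (err DT h) := le_max_left _ _
  have hmT : err DT h ≤ max (err DS h) (err DT h) := le_max_right _ _
  linarith
end

section
/- Let D_S and D_T be data distributions on X × {−1,+1} and let h : X → {−1,+1} be a measurable classifier. Then max{ err_{D_S}(h), err_{D_T}(h) } ≥ ( d_TV((D_S)_Y, (D_T)_Y) − d_TV((D_S)_X, (D_T)_X) ) / 2, where (D)_Y denotes the label marginal of D, (D)_X denotes the feature marginal of D (the pushforward under (x,y) ↦ x), and the total variation distance between two probability measures P, Q on a measurable space is d_TV(P,Q) := sup over measurable sets A of |P(A) − Q(A)|. -/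
open MeasureTheory

/-- Total variation distance between two (probability) measures on a measurable space:
`sup_{A measurable} |P(A) − Q(A)|`. -/
noncomputable def dTV {Y : Type*} [MeasurableSpace Y] (P Q : Measure Y) : ℝ :=
  sSup {r : ℝ | ∃ A : Set Y, MeasurableSet A ∧ r = |(P A).toReal - (Q A).toReal|}

/-!
For every set of labels `A`, the events "the label lies in `A`" and "the prediction `h x` lies
in `A`" differ only on the error event of `h`, so the label marginal of `A` and the feature
marginal of `h ⁻¹' A` differ by at most the error. Going from the source label marginal to the
target one through the two feature marginals therefore gives
`d_TV(labels) ≤ err_S h + err_T h + d_TV(features)`, and the sum of two errors is at most twice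
their maximum.
-/

section dTV

variable {Y : Type*} [MeasurableSpace Y] {P Q : Measure Y}

theorem abs_measureReal_sub_le_dTV [IsFiniteMeasure P] [IsFiniteMeasure Q] {A : Set Y}
    (hA : MeasurableSet A) : |P.real A - Q.real A| ≤ dTV P Q := by
  refine le_csSup ⟨P.real Set.univ + Q.real Set.univ, ?_⟩ ⟨A, hA, rfl⟩
  rintro _ ⟨B, -, rfl⟩
  calc |P.real B - Q.real B| ≤ |P.real B| + |Q.real B| := abs_sub _ _
    _ = P.real B + Q.real B := by rw [abs_of_nonneg measureReal_nonneg,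
        abs_of_nonneg measureReal_nonneg]
    _ ≤ P.real Set.univ + Q.real Set.univ :=
        add_le_add (measureReal_mono (Set.subset_univ B)) (measureReal_mono (Set.subset_univ B))

theorem dTV_le {c : ℝ} (h : ∀ A, MeasurableSet A → |P.real A - Q.real A| ≤ c) :
    dTV P Q ≤ c :=
  csSup_le ⟨_, ∅, .empty, rfl⟩ fun _ ⟨A, hA, hr⟩ => hr ▸ h A hA

end dTV

theorem abs_map_snd_sub_map_fst_preimage_le_err {X : Type*} [MeasurableSpace X]
    (D : Measure (X × Bool)) [IsFiniteMeasure D] {h : X → Bool} (hh : Measurable h)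
    (A : Set Bool) :
    |(D.map Prod.snd).real A - (D.map Prod.fst).real (h ⁻¹' A)| ≤ err D h := by
  rw [map_measureReal_apply measurable_snd (.of_discrete),
    map_measureReal_apply measurable_fst (hh .of_discrete)]
  refine (abs_measureReal_sub_le_measureReal_symmDiff
    (measurable_snd (.of_discrete)).nullMeasurableSet
    (measurable_fst (hh .of_discrete)).nullMeasurableSet).trans (measureReal_mono ?_)
  rintro ⟨x, y⟩ hxy (hhy : h x = y)
  rcases Set.mem_symmDiff.mp hxy with ⟨hy, hx⟩ | ⟨hx, hy⟩
  · exact hx (show h x ∈ A from hhy ▸ hy)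
  · exact hy (show y ∈ A from hhy ▸ hx)

/-- Lower bound for learning tradeoffs via feature marginals: any classifier `h` must
incur, on either the source distribution `D_S` or the target distribution `D_T`, error
at least `(d_TV((D_S)_Y, (D_T)_Y) − d_TV((D_S)_X, (D_T)_X)) / 2`, where `(D)_Y` is the
label marginal and `(D)_X` the feature marginal. -/
theorem tradeoff_lower_bound_feature_marginals
    {X : Type*} [MeasurableSpace X]
    (DS DT : Measure (X × Bool))
    [IsProbabilityMeasure DS] [IsProbabilityMeasure DT]
    (h : X → Bool) (hmeas : Measurable h) :
    max (err DS h) (err DT h) ≥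
      (dTV (DS.map Prod.snd) (DT.map Prod.snd)
        - dTV (DS.map Prod.fst) (DT.map Prod.fst)) / 2 := by
  have key : dTV (DS.map Prod.snd) (DT.map Prod.snd) ≤
      err DS h + err DT h + dTV (DS.map Prod.fst) (DT.map Prod.fst) := by
    refine dTV_le fun A _ => ?_
    have hS := abs_map_snd_sub_map_fst_preimage_le_err DS hmeas A
    have hT := abs_map_snd_sub_map_fst_preimage_le_err DT hmeas A
    have hX := abs_measureReal_sub_le_dTV (P := DS.map Prod.fst) (Q := DT.map Prod.fst)
      (hmeas (.of_discrete (s := A)))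
    rw [abs_sub_comm] at hT
    calc _ ≤ _ := abs_sub_le _ ((DT.map Prod.fst).real (h ⁻¹' A)) _
      _ ≤ _ + _ := add_le_add_left (abs_sub_le _ ((DS.map Prod.fst).real (h ⁻¹' A)) _) _
      _ ≤ _ := by linarith
  linarith [le_max_left (err DS h) (err DT h), le_max_right (err DS h) (err DT h)]
end

section
/- Suboptimality of the source-optimal classifier under covariate shift: let D_S be a data distribution on X × {−1,+1} and let H be a set of measurable classifiers. Let ω₁, ω₂ : X → [0,∞) be measurable importance weights such that D₁ := D_S.withDensity((x,y) ↦ ω₁(x)) and D₂ := D_S.withDensity((x,y) ↦ ω₂(x)) are probability measures (covariate-shifted distributions induced by deploying models h₁ and h₂ respectively), and assume ω₁ and ω₂ are square-integrable with respect to D_S. Suppose h₁ ∈ H minimizes the source error, i.e., err_{D_S}(h₁) ≤ err_{D_S}(h') for all h' ∈ H. Then for every h₂ ∈ H: err_{D₁}(h₁) − err_{D₂}(h₂) ≤ sqrt(err_{D_S}(h₂)) · ( sqrt(Var_{D_S}(ω₁)) + sqrt(Var_{D_S}(ω₂)) ), where Var_{D_S}(ω) := E_{D_S}[ω(X)²]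 − (E_{D_S}[ω(X)])² is the variance of the importance weight under the source feature distribution. -/
open MeasureTheory

/-- The covariate-shifted distribution induced from `D_S` by an importance weight
`ω : X → [0, ∞)`: its density with respect to `D_S` is `ω` composed with the feature
projection. -/
noncomputable def inducedCS {X : Type*} [MeasurableSpace X]
    (DS : Measure (X × Bool)) (ω : X → ℝ) : Measure (X × Bool) :=
  DS.withDensity (fun p => ENNReal.ofReal (ω p.1))

/-- Variance of the importance weight `ω` under the source distribution:
`E_{D_S}[ω(X)²] − (E_{D_S}[ω(X)])²`. -/
noncomputable def varW {X : Type*} [MeasurableSpace X]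
    (DS : Measure (X × Bool)) (ω : X → ℝ) : ℝ :=
  (∫ p : X × Bool, (ω p.1) ^ 2 ∂DS) - (∫ p : X × Bool, ω p.1 ∂DS) ^ 2

/-! For a weight `f ≥ 0` with `∫ f dD_S = 1`, the shifted measure of a set `A` differs from its
source measure by `∫_A (f - 1) dD_S`, and Cauchy–Schwarz bounds this by
`√(D_S A) · ‖f - 1‖₂ = √(D_S A) · √(Var f)`. Applied to the misclassification sets of `h₁` and
`h₂`, this turns `err_{D₁}(h₁) - err_{D₂}(h₂)` into `err_S(h₁) - err_S(h₂) ≤ 0` plus two such error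
terms, each at most `√(err_S h₂) · √(Var ωᵢ)`. -/

namespace MeasureTheory

variable {α : Type*} [MeasurableSpace α]

theorem abs_integral_le_sqrt_measureReal_univ_mul_sqrt_integral_sq {ν : Measure α}
    [IsFiniteMeasure ν] {g : α → ℝ} (hg : MemLp g 2 ν) :
    |∫ x, g x ∂ν| ≤ √(ν.real Set.univ) * √(∫ x, g x ^ 2 ∂ν) := by
  have hg_abs : MemLp (fun x => |g x|) (ENNReal.ofReal 2) ν := by
    simpa [Real.norm_eq_abs] using hg.norm
  calc |∫ x, g x ∂ν| ≤ ∫ x, |g x| * 1 ∂ν := by simpa using abs_integral_le_integral_abs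
    _ ≤ (∫ x, |g x| ^ (2 : ℝ) ∂ν) ^ (1 / 2 : ℝ) * (∫ _, (1 : ℝ) ^ (2 : ℝ) ∂ν) ^ (1 / 2 : ℝ) :=
      integral_mul_le_Lp_mul_Lq_of_nonneg .two_two (.of_forall fun x => abs_nonneg (g x))
        (.of_forall fun _ => zero_le_one) hg_abs (memLp_const 1)
    _ = √(ν.real Set.univ) * √(∫ x, g x ^ 2 ∂ν) := by
      simp [Real.sqrt_eq_rpow, mul_comm]

theorem abs_setIntegral_le_sqrt_measureReal_mul_sqrt_integral_sq {μ : Measure α}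
    [IsFiniteMeasure μ] {g : α → ℝ} (hg : MemLp g 2 μ) (s : Set α) :
    |∫ x in s, g x ∂μ| ≤ √(μ.real s) * √(∫ x, g x ^ 2 ∂μ) := by
  calc |∫ x in s, g x ∂μ| ≤ √((μ.restrict s).real Set.univ) * √(∫ x in s, g x ^ 2 ∂μ) :=
        abs_integral_le_sqrt_measureReal_univ_mul_sqrt_integral_sq (hg.restrict s)
    _ ≤ √(μ.real s) * √(∫ x, g x ^ 2 ∂μ) := by
      rw [measureReal_restrict_apply_univ]
      gcongr √(μ.real s) * √?_
      exact setIntegral_le_integral hg.integrable_sq (.of_forall fun x => sq_nonneg (g x))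

theorem withDensity_ofReal_real_apply {μ : Measure α} [SFinite μ] {f : α → ℝ}
    (hf : Integrable f μ) (hf_nonneg : 0 ≤ᵐ[μ] f) (s : Set α) :
    (μ.withDensity fun x => ENNReal.ofReal (f x)).real s = ∫ x in s, f x ∂μ := by
  rw [measureReal_def, withDensity_apply',
    ← ofReal_integral_eq_lintegral_ofReal hf.integrableOn (ae_restrict_of_ae hf_nonneg),
    ENNReal.toReal_ofReal (integral_nonneg_of_ae (ae_restrict_of_ae hf_nonneg))]

theorem integral_eq_one_of_isProbabilityMeasure_withDensity {μ : Measure α} [SFinite μ]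
    {f : α → ℝ} (hf : Integrable f μ) (hf_nonneg : 0 ≤ᵐ[μ] f)
    [IsProbabilityMeasure (μ.withDensity fun x => ENNReal.ofReal (f x))] :
    ∫ x, f x ∂μ = 1 := by
  rw [← setIntegral_univ, ← withDensity_ofReal_real_apply hf hf_nonneg, probReal_univ]

theorem abs_withDensity_real_sub_measureReal_le {μ : Measure α} [IsProbabilityMeasure μ]
    {f : α → ℝ} (hf : Integrable f μ) (hf_nonneg : 0 ≤ᵐ[μ] f) (hf_sq : Integrable (fun x => f x ^ 2) μ)
    [IsProbabilityMeasure (μ.withDensity fun x => ENNReal.ofReal (f x))] (s : Set α) :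
    |(μ.withDensity fun x => ENNReal.ofReal (f x)).real s - μ.real s| ≤
      √(μ.real s) * √((∫ x, f x ^ 2 ∂μ) - (∫ x, f x ∂μ) ^ 2) := by
  have hmean := integral_eq_one_of_isProbabilityMeasure_withDensity hf hf_nonneg
  have hf_L2 : MemLp f 2 μ := (memLp_two_iff_integrable_sq hf.aestronglyMeasurable).2 hf_sq
  have hvar : ∫ x, (f x - 1) ^ 2 ∂μ = (∫ x, f x ^ 2 ∂μ) - (∫ x, f x ∂μ) ^ 2 := by
    have := ProbabilityTheory.variance_eq_integral hf.aestronglyMeasurable.aemeasurable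
    rw [ProbabilityTheory.variance_eq_sub hf_L2] at this
    simpa [hmean] using this.symm
  have hdiff : (μ.withDensity fun x => ENNReal.ofReal (f x)).real s - μ.real s =
      ∫ x in s, (f x - 1) ∂μ := by
    rw [integral_sub hf.integrableOn (integrable_const 1), setIntegral_const, smul_eq_mul, mul_one,
      withDensity_ofReal_real_apply hf hf_nonneg]
  rw [hdiff, ← hvar]
  exact abs_setIntegral_le_sqrt_measureReal_mul_sqrt_integral_sq
    (hf_L2.sub (memLp_const 1) : MemLp (fun x => f x - 1) 2 μ) s

end MeasureTheory

theorem abs_err_inducedCS_sub_err_le {X : Type*} [MeasurableSpace X]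
    (DS : Measure (X × Bool)) [IsProbabilityMeasure DS] (ω : X → ℝ) (hω_nonneg : ∀ x, 0 ≤ ω x)
    (hD_prob : IsProbabilityMeasure (inducedCS DS ω))
    (hω_int : Integrable (fun p : X × Bool => ω p.1) DS)
    (hω_sq_int : Integrable (fun p : X × Bool => (ω p.1) ^ 2) DS) (h : X → Bool) :
    |err (inducedCS DS ω) h - err DS h| ≤ √(err DS h) * √(varW DS ω) := by
  have : IsProbabilityMeasure (DS.withDensity fun p => ENNReal.ofReal (ω p.1)) := hD_prob
  exact abs_withDensity_real_sub_measureReal_le hω_int (.of_forall fun p => hω_nonneg p.1)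
    hω_sq_int _

theorem source_optimal_suboptimality_covariate_shift_general
    {X : Type*} [MeasurableSpace X]
    (DS : Measure (X × Bool)) [IsProbabilityMeasure DS]
    (H : Set (X → Bool))
    (ω₁ ω₂ : X → ℝ)
    (hω₁_nonneg : ∀ x, 0 ≤ ω₁ x) (hω₂_nonneg : ∀ x, 0 ≤ ω₂ x)
    (hD₁_prob : IsProbabilityMeasure (inducedCS DS ω₁))
    (hD₂_prob : IsProbabilityMeasure (inducedCS DS ω₂))
    (hω₁_int : Integrable (fun p : X × Bool => ω₁ p.1) DS)
    (hω₂_int : Integrable (fun p : X × Bool => ω₂ p.1) DS)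
    (hω₁_sq_int : Integrable (fun p : X × Bool => (ω₁ p.1) ^ 2) DS)
    (hω₂_sq_int : Integrable (fun p : X × Bool => (ω₂ p.1) ^ 2) DS)
    (h₁ : X → Bool)
    (h₁_min : ∀ h' ∈ H, err DS h₁ ≤ err DS h')
    (h₂ : X → Bool) (hh₂ : h₂ ∈ H) :
    err (inducedCS DS ω₁) h₁ - err (inducedCS DS ω₂) h₂ ≤
      Real.sqrt (err DS h₂) *
        (Real.sqrt (varW DS ω₁) + Real.sqrt (varW DS ω₂)) := by
  have shift₁ := abs_err_inducedCS_sub_err_le DS ω₁ hω₁_nonneg hD₁_prob hω₁_int hω₁_sq_int h₁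
  have shift₂ := abs_err_inducedCS_sub_err_le DS ω₂ hω₂_nonneg hD₂_prob hω₂_int hω₂_sq_int h₂
  have source_le : err DS h₁ ≤ err DS h₂ := h₁_min h₂ hh₂
  calc err (inducedCS DS ω₁) h₁ - err (inducedCS DS ω₂) h₂
      = (err (inducedCS DS ω₁) h₁ - err DS h₁) + (err DS h₁ - err DS h₂)
          + (err DS h₂ - err (inducedCS DS ω₂) h₂) := by ring
    _ ≤ √(err DS h₁) * √(varW DS ω₁) + 0 + √(err DS h₂) * √(varW DS ω₂) := by
      gcongr
      · exact (abs_sub_le_iff.1 shift₁).1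
      · exact sub_nonpos.2 source_le
      · exact (abs_sub_le_iff.1 shift₂).2
    _ ≤ √(err DS h₂) * (√(varW DS ω₁) + √(varW DS ω₂)) := by
      rw [mul_add, add_zero]
      gcongr

/-- Suboptimality of the source-optimal classifier under covariate shift: if `h₁ ∈ H`
minimizes the source error and `D₁, D₂` are the covariate-shifted distributions induced
by square-integrable importance weights `ω₁, ω₂`, then for every `h₂ ∈ H`:
`err_{D₁}(h₁) − err_{D₂}(h₂) ≤ √(err_{D_S}(h₂)) · (√Var(ω₁) + √Var(ω₂))`. -/
theorem source_optimal_suboptimality_covariate_shift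
    {X : Type*} [MeasurableSpace X]
    (DS : Measure (X × Bool)) [IsProbabilityMeasure DS]
    (H : Set (X → Bool)) (hHmeas : ∀ f ∈ H, Measurable f)
    (ω₁ ω₂ : X → ℝ)
    (hω₁_meas : Measurable ω₁) (hω₂_meas : Measurable ω₂)
    (hω₁_nonneg : ∀ x, 0 ≤ ω₁ x) (hω₂_nonneg : ∀ x, 0 ≤ ω₂ x)
    (hD₁_prob : IsProbabilityMeasure (inducedCS DS ω₁))
    (hD₂_prob : IsProbabilityMeasure (inducedCS DS ω₂))
    (hω₁_int : Integrable (fun p : X × Bool => ω₁ p.1) DS)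
    (hω₂_int : Integrable (fun p : X × Bool => ω₂ p.1) DS)
    (hω₁_sq_int : Integrable (fun p : X × Bool => (ω₁ p.1) ^ 2) DS)
    (hω₂_sq_int : Integrable (fun p : X × Bool => (ω₂ p.1) ^ 2) DS)
    (h₁ : X → Bool) (hh₁ : h₁ ∈ H)
    (h₁_min : ∀ h' ∈ H, err DS h₁ ≤ err DS h')
    (h₂ : X → Bool) (hh₂ : h₂ ∈ H) :
    err (inducedCS DS ω₁) h₁ - err (inducedCS DS ω₂) h₂ ≤
      Real.sqrt (err DS h₂) *
        (Real.sqrt (varW DS ω₁) + Real.sqrt (varW DS ω₂)) :=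
  source_optimal_suboptimality_covariate_shift_general DS H ω₁ ω₂ hω₁_nonneg hω₂_nonneg hD₁_prob
    hD₂_prob hω₁_int hω₂_int hω₁_sq_int hω₂_sq_int h₁ h₁_min h₂ hh₂
end

section
/- Strict positivity of the total-variation gap under covariate shift: let μ be a probability measure on X, let ω : X → [0,∞) be measurable with ∫ ω dμ = 1, let η : X → [0,1] be measurable (the conditional probability of label +1 given the feature), and let g : X → {0,1} be measurable (the indicator of h(x) = +1). Write X₊ := {x : ω(x) ≥ 1} and X₋ := {x : ω(x) < 1}. Assume: (A1) |∫_{X₊} η·(1−ω) dμ| ≥ |∫_{X₋} η·(1−ω) dμ|; (A2) |∫_{X₊} g·(1−ω) dμ| ≥ |∫_{X₋} g·(1−ω) dμ|; (A3) ∫ (η − g)·(ω − 1) dμ > 0 (i.e., the covariance under μ of η(X) − g(X) with ω(X) is strictly positive). Then |∫ η·(1−ω) dμ| − |∫ g·(1−ω) dμ| > 0. (The first absolute value equals the total variation distance between the label marginals of the source and covariate-shift induced distributions, and the second equals that between the prediction marginals; combined with the general lower bound this shows max{err_{D_S}(h), err_{D(h)}(h)} is strictly positive.) -/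
/-!
Under A1 (resp. A2) the signed mass change `∫ f (1 - ω) dμ` is nonpositive: its part over
`X₋ = {ω < 1}` is nonnegative, its part over `X₊ = {1 ≤ ω}` is nonpositive, and the latter
dominates in absolute value. So both absolute values are the negated integrals, and their
difference is `∫ g (1 - ω) dμ - ∫ η (1 - ω) dμ = ∫ (η - g)(ω - 1) dμ`, positive by A3.
-/

open MeasureTheory

section

variable {X : Type*} [MeasurableSpace X] {μ : Measure X}

theorem integral_nonpos_of_abs_setIntegral_le_abs_setIntegral_compl {f : X → ℝ} {s : Set X}
    (hs : MeasurableSet s) (hf : Integrable f μ) (hpos : ∀ x ∈ s, 0 ≤ f x)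
    (hneg : ∀ x ∈ sᶜ, f x ≤ 0) (h : |∫ x in s, f x ∂μ| ≤ |∫ x in sᶜ, f x ∂μ|) :
    ∫ x, f x ∂μ ≤ 0 := by
  have hs_nonneg := setIntegral_nonneg (μ := μ) hs hpos
  have hsc_nonpos := setIntegral_nonpos (μ := μ) hs.compl hneg
  rw [abs_of_nonneg hs_nonneg, abs_of_nonpos hsc_nonpos] at h
  rw [← integral_add_compl hs hf]
  linarith

theorem integrable_mul_one_sub [IsFiniteMeasure μ] {f ω : X → ℝ} (hf : Measurable f)
    (hf01 : ∀ x, f x ∈ Set.Icc (0 : ℝ) 1) (hω : Integrable ω μ) :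
    Integrable (fun x => f x * (1 - ω x)) μ :=
  ((integrable_const 1).sub hω).bdd_mul hf.aestronglyMeasurable <| ae_of_all _ fun x => by
    rw [Real.norm_of_nonneg (hf01 x).1]
    exact (hf01 x).2

theorem integral_mul_one_sub_nonpos {f ω : X → ℝ} (hω : Measurable ω) (hf : ∀ x, 0 ≤ f x)
    (hint : Integrable (fun x => f x * (1 - ω x)) μ)
    (hA : |∫ x in {x | ω x < 1}, f x * (1 - ω x) ∂μ| ≤
      |∫ x in {x | 1 ≤ ω x}, f x * (1 - ω x) ∂μ|) :
    ∫ x, f x * (1 - ω x) ∂μ ≤ 0 := by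
  have hcompl : {x | ω x < 1}ᶜ = {x | 1 ≤ ω x} := by ext; simp
  refine integral_nonpos_of_abs_setIntegral_le_abs_setIntegral_compl
    (measurableSet_lt hω measurable_const) hint
    (fun x hx => mul_nonneg (hf x) (sub_nonneg.2 (le_of_lt hx))) (fun x hx => ?_) (hcompl ▸ hA)
  rw [hcompl] at hx
  exact mul_nonpos_of_nonneg_of_nonpos (hf x) (sub_nonpos.2 hx)

end

theorem tv_gap_strictly_positive_covariate_shift_general
    {X : Type*} [MeasurableSpace X]
    (μ : Measure X) [IsProbabilityMeasure μ]
    (ω : X → ℝ) (hω_meas : Measurable ω)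
    (hω_int : ∫ x, ω x ∂μ = 1)
    (η : X → ℝ) (hη_meas : Measurable η) (hη01 : ∀ x, η x ∈ Set.Icc (0 : ℝ) 1)
    (g : X → ℝ) (hg_meas : Measurable g) (hg01 : ∀ x, g x = 0 ∨ g x = 1)
    (A1 : |∫ x in {x | ω x < 1}, η x * (1 - ω x) ∂μ| ≤
          |∫ x in {x | 1 ≤ ω x}, η x * (1 - ω x) ∂μ|)
    (A2 : |∫ x in {x | ω x < 1}, g x * (1 - ω x) ∂μ| ≤
          |∫ x in {x | 1 ≤ ω x}, g x * (1 - ω x) ∂μ|)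
    (A3 : 0 < ∫ x, (η x - g x) * (ω x - 1) ∂μ) :
    0 < |∫ x, η x * (1 - ω x) ∂μ| - |∫ x, g x * (1 - ω x) ∂μ| := by
  have hω : Integrable ω μ := .of_integral_ne_zero (by simp [hω_int])
  have hg01' : ∀ x, g x ∈ Set.Icc (0 : ℝ) 1 := fun x => by rcases hg01 x with h | h <;> simp [h]
  have hη_int := integrable_mul_one_sub hη_meas hη01 hω
  have hg_int := integrable_mul_one_sub hg_meas hg01' hω
  have hη_nonpos := integral_mul_one_sub_nonpos hω_meas (fun x => (hη01 x).1) hη_int A1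
  have hg_nonpos := integral_mul_one_sub_nonpos hω_meas (fun x => (hg01' x).1) hg_int A2
  have hA3 : ∫ x, (η x - g x) * (ω x - 1) ∂μ =
      ∫ x, g x * (1 - ω x) ∂μ - ∫ x, η x * (1 - ω x) ∂μ := by
    rw [← integral_sub hg_int hη_int]
    congr 1 with x
    ring
  rw [abs_of_nonpos hη_nonpos, abs_of_nonpos hg_nonpos]
  linarith

/-- Strict positivity of the total-variation gap under covariate shift: with source
feature distribution `μ`, importance weight `ω ≥ 0` with `∫ ω dμ = 1`, conditional
positive-label probability `η : X → [0,1]`, and `g : X → {0,1}` the indicator of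
`h(x) = +1`, if (A1) the reweighting mass change on labels is dominated by the region
`X₊ = {ω ≥ 1}`, (A2) likewise for predictions, and (A3) the covariance of `η − g` with
`ω` under `μ` is strictly positive, then
`|∫ η·(1−ω) dμ| − |∫ g·(1−ω) dμ| > 0`. -/
theorem tv_gap_strictly_positive_covariate_shift
    {X : Type*} [MeasurableSpace X]
    (μ : Measure X) [IsProbabilityMeasure μ]
    (ω : X → ℝ) (hω_meas : Measurable ω) (hω_nonneg : ∀ x, 0 ≤ ω x)
    (hω_int : ∫ x, ω x ∂μ = 1)
    (η : X → ℝ) (hη_meas : Measurable η) (hη01 : ∀ x, η x ∈ Set.Icc (0 : ℝ) 1)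
    (g : X → ℝ) (hg_meas : Measurable g) (hg01 : ∀ x, g x = 0 ∨ g x = 1)
    (A1 : |∫ x in {x | ω x < 1}, η x * (1 - ω x) ∂μ| ≤
          |∫ x in {x | 1 ≤ ω x}, η x * (1 - ω x) ∂μ|)
    (A2 : |∫ x in {x | ω x < 1}, g x * (1 - ω x) ∂μ| ≤
          |∫ x in {x | 1 ≤ ω x}, g x * (1 - ω x) ∂μ|)
    (A3 : 0 < ∫ x, (η x - g x) * (ω x - 1) ∂μ) :
    0 < |∫ x, η x * (1 - ω x) ∂μ| - |∫ x, g x * (1 - ω x) ∂μ| :=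
  tv_gap_strictly_positive_covariate_shift_general μ ω hω_meas hω_int η hη_meas hη01 g hg_meas hg01
    A1 A2 A3
end

section
/- Target-shift upper bound: let μ₊ and μ₋ be probability measures on X (the class-conditional feature distributions for labels +1 and −1), and for p' ∈ [0,1] let D(p') denote the data distribution on X × {−1,+1} given by the mixture p'·(μ₊ ⊗ δ_{+1}) + (1−p')·(μ₋ ⊗ δ_{−1}), so that err_{D(p')}(h) = p'·μ₊({x : h(x) ≠ +1}) + (1−p')·μ₋({x : h(x) ≠ −1}). Let H be a set of measurable classifiers, let p ∈ [0,1] be the source positive-label prior, and suppose h₁ ∈ H satisfies err_{D(p)}(h₁) ≤ err_{D(p)}(h') for all h' ∈ H. Then for every h₂ ∈ H and all p₁, p₂ ∈ [0,1] (the positive-label priors of the distributions induced by h₁ and h₂ respectively): err_{D(p₁)}(h₁) − err_{D(p₂)}(h₂) ≤ |p₁ − p₂| + (1 + p) · ( |μ₊({h₁ = +1}) − μ₊({h₂ = +1})| + |μ₋({h₁ = +1}) − μ₋({h₂ = +1})| ). -/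
open MeasureTheory

/-- The target-shift family of data distributions: with class-conditional feature
distributions `μ₊` (for label `+1 = true`) and `μ₋` (for label `−1 = false`) and
positive-label prior `p'`, the data distribution is the mixture
`p' · (μ₊ ⊗ δ_{+1}) + (1 − p') · (μ₋ ⊗ δ_{−1})`. -/
noncomputable def targetShiftD {X : Type*} [MeasurableSpace X]
    (μp μn : Measure X) (p' : ℝ) : Measure (X × Bool) :=
  (ENNReal.ofReal p') • (μp.prod (Measure.dirac true)) +
    (ENNReal.ofReal (1 - p')) • (μn.prod (Measure.dirac false))

lemma err_targetShiftD {X : Type*} [MeasurableSpace X]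
    (μp μn : Measure X) [IsProbabilityMeasure μp] [IsProbabilityMeasure μn]
    (p' : ℝ) (hp0 : 0 ≤ p') (hp1 : p' ≤ 1) (h : X → Bool) (hm : Measurable h) :
    err (targetShiftD μp μn p') h =
      p' * (1 - (μp {x | h x = true}).toReal) + (1 - p') * (μn {x | h x = true}).toReal := by
  have hmS : MeasurableSet {q : X × Bool | h q.1 ≠ q.2} := by
    have : {q : X × Bool | h q.1 ≠ q.2} =
        ((fun q : X × Bool => (h q.1, q.2)) ⁻¹' {q : Bool × Bool | q.1 ≠ q.2}) := rfl
    rw [this]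
    exact ((hm.comp measurable_fst).prodMk measurable_snd) MeasurableSet.of_discrete
  have hT : (μp {x | h x = true}) ≠ ⊤ := measure_ne_top _ _
  have hT2 : (μn {x | h x = true}) ≠ ⊤ := measure_ne_top _ _
  have hpre1 : ((fun x : X => (x, true)) ⁻¹' {q : X × Bool | h q.1 ≠ q.2}) =
      {x | h x = true}ᶜ := by
    ext x; simp
  have hpre2 : ((fun x : X => (x, false)) ⁻¹' {q : X × Bool | h q.1 ≠ q.2}) =
      {x | h x = true} := by
    ext x; simp
  have hmt : MeasurableSet {x | h x = true} := by
    have : {x | h x = true} = h ⁻¹' {true} := rfl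
    rw [this]; exact hm MeasurableSet.of_discrete
  rw [err, targetShiftD, Measure.add_apply, Measure.smul_apply, Measure.smul_apply,
    Measure.prod_dirac, Measure.prod_dirac,
    Measure.map_apply measurable_prodMk_right hmS,
    Measure.map_apply measurable_prodMk_right hmS, hpre1, hpre2,
    measure_compl hmt (measure_ne_top _ _), measure_univ]
  rw [smul_eq_mul, smul_eq_mul, ENNReal.toReal_add, ENNReal.toReal_mul, ENNReal.toReal_mul,
    ENNReal.toReal_ofReal hp0, ENNReal.toReal_ofReal (by linarith : (0:ℝ) ≤ 1 - p'),
    ENNReal.toReal_sub_of_le prob_le_one (by simp)]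
  · simp
  · exact ENNReal.mul_ne_top ENNReal.ofReal_ne_top (by simp [ENNReal.sub_ne_top])
  · exact ENNReal.mul_ne_top ENNReal.ofReal_ne_top hT2

/-- Target-shift upper bound: if `h₁ ∈ H` minimizes the error on the source distribution
`D(p)`, then for every `h₂ ∈ H` and priors `p₁, p₂ ∈ [0,1]` of the induced distributions:
`err_{D(p₁)}(h₁) − err_{D(p₂)}(h₂) ≤ |p₁ − p₂| + (1 + p)·(d_TV⁺ + d_TV⁻)` where
`d_TV⁺, d_TV⁻` are the total variation distances between the prediction distributions of
`h₁, h₂` on the positive and negative class conditionals. -/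
theorem target_shift_upper_bound
    {X : Type*} [MeasurableSpace X]
    (μp μn : Measure X) [IsProbabilityMeasure μp] [IsProbabilityMeasure μn]
    (H : Set (X → Bool)) (hHmeas : ∀ f ∈ H, Measurable f)
    (p : ℝ) (hp : p ∈ Set.Icc (0 : ℝ) 1)
    (h₁ : X → Bool) (hh₁ : h₁ ∈ H)
    (h₁_min : ∀ h' ∈ H, err (targetShiftD μp μn p) h₁ ≤ err (targetShiftD μp μn p) h')
    (h₂ : X → Bool) (hh₂ : h₂ ∈ H)
    (p₁ p₂ : ℝ) (hp₁ : p₁ ∈ Set.Icc (0 : ℝ) 1) (hp₂ : p₂ ∈ Set.Icc (0 : ℝ) 1) :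
    err (targetShiftD μp μn p₁) h₁ - err (targetShiftD μp μn p₂) h₂ ≤
      |p₁ - p₂| + (1 + p) *
        (|(μp {x | h₁ x = true}).toReal - (μp {x | h₂ x = true}).toReal| +
         |(μn {x | h₁ x = true}).toReal - (μn {x | h₂ x = true}).toReal|) := by
  obtain ⟨hp0, hp1⟩ := hp
  obtain ⟨hp10, hp11⟩ := hp₁
  obtain ⟨hp20, hp21⟩ := hp₂
  have hm1 := hHmeas h₁ hh₁
  have hm2 := hHmeas h₂ hh₂
  set a₁ := (μp {x | h₁ x = true}).toReal with ha₁
  set a₂ := (μp {x | h₂ x = true}).toReal with ha₂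
  set b₁ := (μn {x | h₁ x = true}).toReal with hb₁
  set b₂ := (μn {x | h₂ x = true}).toReal with hb₂
  have ha₁0 : 0 ≤ a₁ := ENNReal.toReal_nonneg
  have ha₂0 : 0 ≤ a₂ := ENNReal.toReal_nonneg
  have hb₁0 : 0 ≤ b₁ := ENNReal.toReal_nonneg
  have hb₂0 : 0 ≤ b₂ := ENNReal.toReal_nonneg
  have ha₁1 : a₁ ≤ 1 := by
    rw [ha₁]; exact ENNReal.toReal_le_of_le_ofReal zero_le_one (by simpa using prob_le_one)
  have ha₂1 : a₂ ≤ 1 := by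
    rw [ha₂]; exact ENNReal.toReal_le_of_le_ofReal zero_le_one (by simpa using prob_le_one)
  have hb₁1 : b₁ ≤ 1 := by
    rw [hb₁]; exact ENNReal.toReal_le_of_le_ofReal zero_le_one (by simpa using prob_le_one)
  have hb₂1 : b₂ ≤ 1 := by
    rw [hb₂]; exact ENNReal.toReal_le_of_le_ofReal zero_le_one (by simpa using prob_le_one)
  have hmin := h₁_min h₂ hh₂
  rw [err_targetShiftD μp μn p hp0 hp1 h₁ hm1, err_targetShiftD μp μn p hp0 hp1 h₂ hm2] at hmin
  rw [err_targetShiftD μp μn p₁ hp10 hp11 h₁ hm1,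
    err_targetShiftD μp μn p₂ hp20 hp21 h₂ hm2]
  have e1 : p₁ - p₂ ≤ |p₁ - p₂| := le_abs_self _
  have e2 : -(p₁ - p₂) ≤ |p₁ - p₂| := neg_le_abs _
  have e3 : a₁ - a₂ ≤ |a₁ - a₂| := le_abs_self _
  have e4 : -(a₁ - a₂) ≤ |a₁ - a₂| := neg_le_abs _
  have e5 : b₁ - b₂ ≤ |b₁ - b₂| := le_abs_self _
  have e6 : -(b₁ - b₂) ≤ |b₁ - b₂| := neg_le_abs _
  nlinarith [mul_nonneg (abs_nonneg (p₁ - p₂)) (sub_nonneg.mpr ha₁1),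
    mul_nonneg (abs_nonneg (p₁ - p₂)) hb₁0,
    mul_nonneg (abs_nonneg (a₁ - a₂)) (sub_nonneg.mpr hp21),
    mul_nonneg (abs_nonneg (b₁ - b₂)) hp20,
    mul_le_mul_of_nonneg_left e3 hp20, mul_le_mul_of_nonneg_left e4 hp20,
    mul_le_mul_of_nonneg_left e5 (by linarith : (0:ℝ) ≤ 1 - p₂),
    mul_le_mul_of_nonneg_left e6 (by linarith : (0:ℝ) ≤ 1 - p₂),
    mul_le_mul_of_nonneg_left e1 (by linarith : (0:ℝ) ≤ 1 - a₁),
    mul_le_mul_of_nonneg_left e2 (by linarith : (0:ℝ) ≤ 1 - a₁),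
    mul_le_mul_of_nonneg_left e1 hb₁0, mul_le_mul_of_nonneg_left e2 hb₁0,
    mul_nonneg hp0 (abs_nonneg (a₁ - a₂)), mul_nonneg hp0 (abs_nonneg (b₁ - b₂))]
end
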